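/- arXiv:2210.04391 — 4 statements merged into one kernel-verified Lean document; each statement's English description precedes it below -/
import Mathlib

section
/- Let p ∈ (1, 2], let H be a real inner product space, let x, y ∈ H, and let ε be a Rademacher random variable (P(ε = 1) = P(ε = −1) = 1/2). Then E‖x + ε y‖^p ≤ ‖x‖^p + ‖y‖^p. -/
/-!
By the parallelogram law, `‖x + y‖² + ‖x - y‖² = 2 (‖x‖² + ‖y‖²)`. Writing `t ^ p = (t²) ^ (p / 2)`
with `p / 2 ∈ [0, 1]`, concavity of `s ↦ s ^ (p / 2)` bounds the average of the left-hand side by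
`(‖x‖² + ‖y‖²) ^ (p / 2)`, and subadditivity of the same function bounds this by `‖x‖ ^ p + ‖y‖ ^ p`.
-/

namespace Real

theorem rpow_add_rpow_div_two_le {a b q : ℝ} (ha : 0 ≤ a) (hb : 0 ≤ b) (hq₀ : 0 ≤ q)
    (hq₁ : q ≤ 1) : (a ^ q + b ^ q) / 2 ≤ ((a + b) / 2) ^ q := by
  have hmid := (concaveOn_rpow hq₀ hq₁).2 ha hb (by norm_num : (0 : ℝ) ≤ 1 / 2)
    (by norm_num : (0 : ℝ) ≤ 1 / 2) (by norm_num)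
  simp only [smul_eq_mul] at hmid
  calc (a ^ q + b ^ q) / 2 = 1 / 2 * a ^ q + 1 / 2 * b ^ q := by ring
    _ ≤ (1 / 2 * a + 1 / 2 * b) ^ q := hmid
    _ = ((a + b) / 2) ^ q := by ring_nf

theorem sq_rpow_div_two {t : ℝ} (ht : 0 ≤ t) (p : ℝ) : (t ^ 2) ^ (p / 2) = t ^ p := by
  rw [← rpow_natCast, ← rpow_mul ht]
  congr 1
  push_cast
  ring

theorem rpow_add_rpow_div_two_le_of_sq_add_sq_eq {a b c d p : ℝ} (ha : 0 ≤ a) (hb : 0 ≤ b)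
    (hc : 0 ≤ c) (hd : 0 ≤ d) (hp₀ : 0 ≤ p) (hp₂ : p ≤ 2)
    (h : a ^ 2 + b ^ 2 = 2 * (c ^ 2 + d ^ 2)) : (a ^ p + b ^ p) / 2 ≤ c ^ p + d ^ p := by
  have hq₀ : 0 ≤ p / 2 := by positivity
  have hq₁ : p / 2 ≤ 1 := by linarith
  calc (a ^ p + b ^ p) / 2
      = ((a ^ 2) ^ (p / 2) + (b ^ 2) ^ (p / 2)) / 2 := by
        rw [sq_rpow_div_two ha, sq_rpow_div_two hb]
    _ ≤ ((a ^ 2 + b ^ 2) / 2) ^ (p / 2) :=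
        rpow_add_rpow_div_two_le (sq_nonneg a) (sq_nonneg b) hq₀ hq₁
    _ = (c ^ 2 + d ^ 2) ^ (p / 2) := by rw [h, mul_div_cancel_left₀ _ two_ne_zero]
    _ ≤ (c ^ 2) ^ (p / 2) + (d ^ 2) ^ (p / 2) :=
        rpow_add_le_add_rpow (sq_nonneg c) (sq_nonneg d) hq₀ hq₁
    _ = c ^ p + d ^ p := by rw [sq_rpow_div_two hc, sq_rpow_div_two hd]

end Real

theorem rademacher_average_norm_rpow_le
    (p : ℝ) (hp1 : 1 < p) (hp2 : p ≤ 2)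
    {H : Type*} [NormedAddCommGroup H] [InnerProductSpace ℝ H] (x y : H) :
    (‖x + y‖ ^ p + ‖x - y‖ ^ p) / 2 ≤ ‖x‖ ^ p + ‖y‖ ^ p :=
  Real.rpow_add_rpow_div_two_le_of_sq_add_sq_eq (norm_nonneg _) (norm_nonneg _) (norm_nonneg _)
    (norm_nonneg _) (by linarith) hp2 (parallelogram_law_with_norm ℝ x y)
end

section
/- Let p ∈ [1, 2] and let X₁, …, X_n be random vectors in a real separable Hilbert space H such that, with S_j = X₁ + ⋯ + X_j, for each j ∈ {2,…,n} the conditional distribution of X_j given S_{j−1} is symmetric and E‖X_j‖ < ∞. Then E‖S_n‖^p ≤ Σ_{j=1}^n E‖X_j‖^p. -/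
/-!
In an inner product space the parallelogram law, concavity of `t ↦ t ^ (p/2)` and
subadditivity of `t ↦ t ^ (p/2)` give `‖a + b‖ ^ p + ‖a - b‖ ^ p ≤ 2 (‖a‖ ^ p + ‖b‖ ^ p)`
for `0 ≤ p ≤ 2`. If `(Y, Z)` and `(Y, -Z)` have the same law, then `‖Y + Z‖ ^ p` and
`‖Y - Z‖ ^ p` have the same expectation, so averaging the pointwise inequality yields
`E ‖Y + Z‖ ^ p ≤ E ‖Y‖ ^ p + E ‖Z‖ ^ p`. Induction on `n` with `Y = S (j - 1)`, `Z = X j`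
concludes.
-/

open MeasureTheory Finset

lemma norm_add_rpow_add_norm_sub_rpow_le {E : Type*} [NormedAddCommGroup E]
    [InnerProductSpace ℝ E] {p : ℝ} (hp0 : 0 ≤ p) (hp2 : p ≤ 2) (a b : E) :
    ‖a + b‖ ^ p + ‖a - b‖ ^ p ≤ 2 * (‖a‖ ^ p + ‖b‖ ^ p) := by
  set q := p / 2
  have hq0 : 0 ≤ q := by positivity
  have hq1 : q ≤ 1 := by simp only [q]; linarith
  have hpow : ∀ x : E, ‖x‖ ^ p = (‖x‖ ^ 2) ^ q := fun x => by
    rw [← Real.rpow_natCast, ← Real.rpow_mul (norm_nonneg x), Nat.cast_ofNat,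
      mul_div_cancel₀ p two_ne_zero]
  have hmean := (Real.concaveOn_rpow hq0 hq1).2
    (Set.mem_Ici.2 (sq_nonneg ‖a + b‖)) (Set.mem_Ici.2 (sq_nonneg ‖a - b‖))
    (by norm_num : (0 : ℝ) ≤ 1 / 2) (by norm_num : (0 : ℝ) ≤ 1 / 2) (by norm_num)
  simp only [smul_eq_mul] at hmean
  have hparallelogram : 1 / 2 * ‖a + b‖ ^ 2 + 1 / 2 * ‖a - b‖ ^ 2 = ‖a‖ ^ 2 + ‖b‖ ^ 2 := by
    linarith [parallelogram_law_with_norm ℝ a b]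
  calc ‖a + b‖ ^ p + ‖a - b‖ ^ p
      = 2 * (1 / 2 * (‖a + b‖ ^ 2) ^ q + 1 / 2 * (‖a - b‖ ^ 2) ^ q) := by
        rw [hpow, hpow]; ring
    _ ≤ 2 * (‖a‖ ^ 2 + ‖b‖ ^ 2) ^ q := by rw [← hparallelogram]; gcongr
    _ ≤ 2 * ((‖a‖ ^ 2) ^ q + (‖b‖ ^ 2) ^ q) := by
        gcongr
        exact Real.rpow_add_le_add_rpow (sq_nonneg _) (sq_nonneg _) hq0 hq1
    _ = 2 * (‖a‖ ^ p + ‖b‖ ^ p) := by rw [hpow, hpow]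

section ConditionallySymmetric

variable {Ω E : Type*} [MeasurableSpace Ω] {μ : Measure Ω} [MeasurableSpace E] {Y Z : Ω → E}

lemma lintegral_comp_add_eq_lintegral_comp_sub_of_map_eq [AddGroup E] [MeasurableAdd₂ E]
    [MeasurableNeg E] (hY : Measurable Y) (hZ : Measurable Z)
    (hsymm : μ.map (fun ω => (Y ω, Z ω)) = μ.map (fun ω => (Y ω, -Z ω)))
    {g : E → ENNReal} (hg : Measurable g) :
    ∫⁻ ω, g (Y ω + Z ω) ∂μ = ∫⁻ ω, g (Y ω - Z ω) ∂μ := by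
  have hg' : Measurable fun z : E × E => g (z.1 + z.2) :=
    hg.comp (measurable_fst.add measurable_snd)
  calc ∫⁻ ω, g (Y ω + Z ω) ∂μ
      = ∫⁻ z, g (z.1 + z.2) ∂μ.map (fun ω => (Y ω, Z ω)) :=
        (lintegral_map hg' (hY.prodMk hZ)).symm
    _ = ∫⁻ z, g (z.1 + z.2) ∂μ.map (fun ω => (Y ω, -Z ω)) := by rw [hsymm]
    _ = ∫⁻ ω, g (Y ω - Z ω) ∂μ := by
        rw [lintegral_map hg' (hY.prodMk hZ.neg : Measurable fun ω => (Y ω, -Z ω))]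
        simp only [sub_eq_add_neg]

lemma lintegral_ofReal_norm_add_rpow_le_of_map_eq [NormedAddCommGroup E] [InnerProductSpace ℝ E]
    [BorelSpace E] [SecondCountableTopology E] {p : ℝ} (hp0 : 0 ≤ p) (hp2 : p ≤ 2)
    (hY : Measurable Y) (hZ : Measurable Z)
    (hsymm : μ.map (fun ω => (Y ω, Z ω)) = μ.map (fun ω => (Y ω, -Z ω))) :
    ∫⁻ ω, ENNReal.ofReal (‖Y ω + Z ω‖ ^ p) ∂μ
      ≤ ∫⁻ ω, ENNReal.ofReal (‖Y ω‖ ^ p) ∂μ + ∫⁻ ω, ENNReal.ofReal (‖Z ω‖ ^ p) ∂μ := by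
  set f : E → ENNReal := fun x => ENNReal.ofReal (‖x‖ ^ p)
  have hf : Measurable f := (measurable_norm.pow_const p).ennreal_ofReal
  have hpointwise : ∀ a b : E, f (a + b) + f (a - b) ≤ 2 * (f a + f b) := fun a b => by
    simp only [f]
    rw [← ENNReal.ofReal_add (by positivity) (by positivity),
      ← ENNReal.ofReal_add (by positivity) (by positivity), ← ENNReal.ofReal_ofNat 2,
      ← ENNReal.ofReal_mul zero_le_two]
    exact ENNReal.ofReal_le_ofReal (norm_add_rpow_add_norm_sub_rpow_le hp0 hp2 a b)
  refine (ENNReal.mul_le_mul_iff_right two_ne_zero ENNReal.ofNat_ne_top).mp ?_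
  calc 2 * ∫⁻ ω, f (Y ω + Z ω) ∂μ
      = ∫⁻ ω, f (Y ω + Z ω) ∂μ + ∫⁻ ω, f (Y ω - Z ω) ∂μ := by
        rw [two_mul, lintegral_comp_add_eq_lintegral_comp_sub_of_map_eq hY hZ hsymm hf]
    _ = ∫⁻ ω, (f (Y ω + Z ω) + f (Y ω - Z ω)) ∂μ :=
        (lintegral_add_left (hf.comp (hY.add hZ)) _).symm
    _ ≤ ∫⁻ ω, 2 * (f (Y ω) + f (Z ω)) ∂μ := lintegral_mono fun ω => hpointwise _ _
    _ = 2 * (∫⁻ ω, f (Y ω) ∂μ + ∫⁻ ω, f (Z ω) ∂μ) := by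
        rw [lintegral_const_mul 2 (by fun_prop), lintegral_add_left (by fun_prop)]

end ConditionallySymmetric

theorem conditionally_symmetric_sum_moment_le_general
    (p : ℝ) (hp1 : 1 ≤ p) (hp2 : p ≤ 2)
    {H : Type*} [NormedAddCommGroup H] [InnerProductSpace ℝ H]
    [SecondCountableTopology H] [MeasurableSpace H] [BorelSpace H]
    {Ω : Type*} [MeasurableSpace Ω] (P : Measure Ω)
    (n : ℕ) (X : ℕ → Ω → H) (hX : ∀ j, Measurable (X j))
    (S : ℕ → Ω → H) (hS : ∀ m, S m = fun ω => ∑ i ∈ Finset.Icc 1 m, X i ω)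
    (hsymm : ∀ j ∈ Finset.Icc 2 n,
      Measure.map (fun ω => (S (j - 1) ω, X j ω)) P
        = Measure.map (fun ω => (S (j - 1) ω, -X j ω)) P) :
    ∫⁻ ω, ENNReal.ofReal (‖S n ω‖ ^ p) ∂P
      ≤ ∑ j ∈ Finset.Icc 1 n, ∫⁻ ω, ENNReal.ofReal (‖X j ω‖ ^ p) ∂P := by
  have hp0 : 0 < p := by linarith
  have hS_meas : ∀ m, Measurable (S m) := fun m => by
    rw [hS m]; exact Finset.measurable_sum _ fun i _ => hX i
  have hS_zero : ∀ ω, S 0 ω = 0 := by simp [hS]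
  have hS_succ : ∀ m ω, S (m + 1) ω = S m ω + X (m + 1) ω := by
    simp [hS, Finset.sum_Icc_succ_top (Nat.le_add_left 1 _)]
  suffices ∀ m ≤ n, ∫⁻ ω, ENNReal.ofReal (‖S m ω‖ ^ p) ∂P
      ≤ ∑ j ∈ Finset.Icc 1 m, ∫⁻ ω, ENNReal.ofReal (‖X j ω‖ ^ p) ∂P from this n le_rfl
  intro m hm
  induction m with
  | zero => simp [hS_zero, Real.zero_rpow hp0.ne']
  | succ m ih =>
    have hstep : ∫⁻ ω, ENNReal.ofReal (‖S (m + 1) ω‖ ^ p) ∂P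
        ≤ ∫⁻ ω, ENNReal.ofReal (‖S m ω‖ ^ p) ∂P
          + ∫⁻ ω, ENNReal.ofReal (‖X (m + 1) ω‖ ^ p) ∂P := by
      simp only [hS_succ]
      rcases Nat.eq_zero_or_pos m with rfl | hm_pos
      · simp [hS_zero]
      · have hj : m + 1 ∈ Finset.Icc 2 n := Finset.mem_Icc.2 ⟨by omega, hm⟩
        exact lintegral_ofReal_norm_add_rpow_le_of_map_eq hp0.le hp2 (hS_meas m) (hX _)
          (by simpa using hsymm (m + 1) hj)
    rw [Finset.sum_Icc_succ_top (Nat.le_add_left 1 m)]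
    exact hstep.trans (by gcongr; exact ih (by omega))

theorem conditionally_symmetric_sum_moment_le
    (p : ℝ) (hp1 : 1 ≤ p) (hp2 : p ≤ 2)
    {H : Type*} [NormedAddCommGroup H] [InnerProductSpace ℝ H]
    [CompleteSpace H] [SecondCountableTopology H] [MeasurableSpace H] [BorelSpace H]
    {Ω : Type*} [MeasurableSpace Ω] (P : Measure Ω) [IsProbabilityMeasure P]
    (n : ℕ) (X : ℕ → Ω → H) (hX : ∀ j, Measurable (X j))
    (S : ℕ → Ω → H) (hS : ∀ m, S m = fun ω => ∑ i ∈ Finset.Icc 1 m, X i ω)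
    (hint : ∀ j ∈ Finset.Icc 2 n, Integrable (fun ω => ‖X j ω‖) P)
    (hsymm : ∀ j ∈ Finset.Icc 2 n,
      Measure.map (fun ω => (S (j - 1) ω, X j ω)) P
        = Measure.map (fun ω => (S (j - 1) ω, -X j ω)) P) :
    ∫⁻ ω, ENNReal.ofReal (‖S n ω‖ ^ p) ∂P
      ≤ ∑ j ∈ Finset.Icc 1 n, ∫⁻ ω, ENNReal.ofReal (‖X j ω‖ ^ p) ∂P :=
  conditionally_symmetric_sum_moment_le_general p hp1 hp2 P n X hX S hS hsymm
end

section
/- Let p ∈ [1, 2) and let X₁, …, X_n be symmetric real-valued random variables that are pairwise independent. Then E|X₁ + ⋯ + X_n|^p ≤ (2/(2−p)) Σ_{j=1}^n E|X_j|^p. -/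
open MeasureTheory ProbabilityTheory Finset

/-!
By the layer-cake formula, `E|S|^p = p ∫₀^∞ t^(p-1) P(|S| > t) dt` for `S = ∑ X_j`. At level `t`,
either some `|X_j| > t`, or `S` equals the sum `T` of the truncations `X_j 1{|X_j| ≤ t}`.
Symmetry makes each truncation centred and pairwise independence makes their variances add, so
Chebyshev gives `P(|T| ≥ t) ≤ t⁻² ∑ E[X_j² ; |X_j| ≤ t]`. Integrated against `p t^(p-1)`, the
first term returns `∑ E|X_j|^p` and, by Tonelli and `∫_{|x|}^∞ t^(p-3) dt = |x|^(p-2) / (2-p)`,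
the second returns `p / (2-p) ∑ E|X_j|^p`; finally `1 + p / (2-p) = 2 / (2-p)`.
-/

namespace PairwiseIndepSymmetric

open Set
open scoped ENNReal

/-- The cut-off is the closed band `|x| ≤ t`, so that `trunc t` is odd; Mathlib's
`ProbabilityTheory.truncation` uses `Ioc (-t) t` and is not. -/
noncomputable def trunc (t x : ℝ) : ℝ := if |x| ≤ t then x else 0

lemma trunc_neg (t x : ℝ) : trunc t (-x) = -trunc t x := by
  unfold trunc; rw [abs_neg]; split <;> simp

lemma abs_trunc_le (t x : ℝ) : |trunc t x| ≤ |t| := by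
  unfold trunc; split
  · exact le_trans (by assumption) (le_abs_self t)
  · simp

lemma trunc_of_abs_le {t x : ℝ} (h : |x| ≤ t) : trunc t x = x := if_pos h

lemma measurable_trunc_uncurry : Measurable fun q : ℝ × ℝ => trunc q.1 q.2 :=
  Measurable.ite (measurableSet_le measurable_snd.abs measurable_fst) measurable_snd
    measurable_const

lemma measurable_trunc (t : ℝ) : Measurable (trunc t) :=
  measurable_trunc_uncurry.comp measurable_prodMk_left

lemma lintegral_trunc_sq_mul_rpow {p : ℝ} (hp0 : 0 < p) (hp2 : p < 2) (x : ℝ) :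
    ∫⁻ t in Ioi 0, ENNReal.ofReal (trunc t x ^ 2 * t ^ (p - 3))
      = ENNReal.ofReal (|x| ^ p / (2 - p)) := by
  rcases eq_or_ne x 0 with rfl | hx
  · simp [trunc, Real.zero_rpow hp0.ne']
  have hx' : 0 < |x| := abs_pos.mpr hx
  have hexp : p - 3 < -1 := by linarith
  have hind : EqOn (fun t => ENNReal.ofReal (trunc t x ^ 2 * t ^ (p - 3)))
      ((Ici |x|).indicator fun t => ENNReal.ofReal (x ^ 2 * t ^ (p - 3))) (Ioi 0) := by
    intro t _
    by_cases h : |x| ≤ t <;> simp [trunc, h]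
  have hsub : Ici |x| ∩ Ioi 0 = Ici |x| :=
    inter_eq_left.mpr fun t (ht : t ∈ Set.Ici |x|) => Set.mem_Ioi.mpr (hx'.trans_le ht)
  rw [setLIntegral_congr_fun measurableSet_Ioi hind, lintegral_indicator measurableSet_Ici,
    Measure.restrict_restrict measurableSet_Ici, hsub, ← restrict_Ioi_eq_restrict_Ici,
    ← ofReal_integral_eq_lintegral_ofReal]
  · rw [integral_const_mul, integral_Ioi_rpow_of_lt hexp hx']
    congr 1
    rw [← sq_abs x, ← Real.rpow_natCast, show p - 3 + 1 = -(2 - p) by ring]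
    field_simp
    rw [← Real.rpow_add hx']
    norm_num
  · exact (integrableOn_Ioi_rpow_of_lt hexp hx').const_mul _
  · filter_upwards [self_mem_ae_restrict measurableSet_Ioi] with t ht
    exact mul_nonneg (sq_nonneg x) (Real.rpow_nonneg (hx'.trans ht).le _)

variable {Ω : Type*} [MeasurableSpace Ω] {P : Measure Ω}

lemma integral_comp_eq_zero_of_odd {X : Ω → ℝ} (hX : Measurable X)
    (hsymm : Measure.map X P = Measure.map (fun ω => -X ω) P) {f : ℝ → ℝ} (hf : Measurable f)
    (hodd : ∀ x, f (-x) = -f x) : ∫ ω, f (X ω) ∂P = 0 := by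
  have h := congrArg (fun μ => ∫ x, f x ∂μ) hsymm
  rw [integral_map hX.aemeasurable hf.aestronglyMeasurable,
    integral_map (φ := fun ω => -X ω) hX.neg.aemeasurable hf.aestronglyMeasurable] at h
  simp only [hodd, integral_neg] at h
  linarith

lemma memLp_trunc_comp [IsFiniteMeasure P] {X : Ω → ℝ} (hX : Measurable X) (t : ℝ)
    (q : ℝ≥0∞) : MemLp (fun ω => trunc t (X ω)) q P :=
  MemLp.of_bound ((measurable_trunc t).comp hX).aestronglyMeasurable |t|
    (ae_of_all _ fun ω => abs_trunc_le t (X ω))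

lemma variance_sum_trunc [IsFiniteMeasure P] {n : ℕ} {X : Fin n → Ω → ℝ}
    (hX : ∀ j, Measurable (X j))
    (hsymm : ∀ j, Measure.map (X j) P = Measure.map (fun ω => -X j ω) P)
    (hindep : ∀ i j, i ≠ j → IndepFun (X i) (X j) P) (t : ℝ) :
    variance (fun ω => ∑ j, trunc t (X j ω)) P = ∑ j, ∫ ω, trunc t (X j ω) ^ 2 ∂P := by
  have hsum : (fun ω => ∑ j, trunc t (X j ω)) = ∑ j, fun ω => trunc t (X j ω) := by
    ext ω; simp
  rw [hsum, IndepFun.variance_sum (fun j _ => memLp_trunc_comp (hX j) t 2)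
    fun i _ j _ hij => (hindep i j hij).comp (measurable_trunc t) (measurable_trunc t)]
  refine Finset.sum_congr rfl fun j _ => variance_of_integral_eq_zero
    ((measurable_trunc t).comp (hX j)).aemeasurable ?_
  exact integral_comp_eq_zero_of_odd (hX j) (hsymm j) (measurable_trunc t) (trunc_neg t)

noncomputable def tailMajorant (P : Measure Ω) (X : Ω → ℝ) (t : ℝ) : ℝ≥0∞ :=
  P {ω | t < |X ω|} + ENNReal.ofReal ((∫ ω, trunc t (X ω) ^ 2 ∂P) / t ^ 2)

lemma measure_lt_abs_sum_le [IsFiniteMeasure P] {n : ℕ} {X : Fin n → Ω → ℝ}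
    (hX : ∀ j, Measurable (X j))
    (hsymm : ∀ j, Measure.map (X j) P = Measure.map (fun ω => -X j ω) P)
    (hindep : ∀ i j, i ≠ j → IndepFun (X i) (X j) P) {t : ℝ} (ht : 0 < t) :
    P {ω | t < |∑ j, X j ω|} ≤ ∑ j, tailMajorant P (X j) t := by
  set T : Ω → ℝ := fun ω => ∑ j, trunc t (X j ω)
  have hT_mean : P[T] = 0 := by
    rw [integral_finsetSum _ fun j _ => (memLp_trunc_comp (hX j) t 1).integrable le_rfl]
    exact Finset.sum_eq_zero fun j _ =>
      integral_comp_eq_zero_of_odd (hX j) (hsymm j) (measurable_trunc t) (trunc_neg t)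
  have hT_memLp : MemLp T 2 P := memLp_finsetSum _ fun j _ => memLp_trunc_comp (hX j) t 2
  have hcover : {ω | t < |∑ j, X j ω|} ⊆
      (⋃ j, {ω | t < |X j ω|}) ∪ {ω | t ≤ |T ω - P[T]|} := by
    intro ω hω
    by_cases hbig : ∃ j, t < |X j ω|
    · exact Or.inl (mem_iUnion.mpr hbig)
    · push Not at hbig
      refine Or.inr ?_
      have : T ω = ∑ j, X j ω := Finset.sum_congr rfl fun j _ => trunc_of_abs_le (hbig j)
      simp only [mem_ofPred_eq, hT_mean, sub_zero, this]
      exact hω.le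
  calc P {ω | t < |∑ j, X j ω|}
      ≤ P (⋃ j, {ω | t < |X j ω|}) + P {ω | t ≤ |T ω - P[T]|} :=
        (measure_mono hcover).trans (measure_union_le _ _)
    _ ≤ ∑ j, P {ω | t < |X j ω|} + ENNReal.ofReal (variance T P / t ^ 2) :=
        add_le_add (measure_iUnion_fintype_le _ _) (meas_ge_le_variance_div_sq hT_memLp ht)
    _ = ∑ j, tailMajorant P (X j) t := by
        rw [variance_sum_trunc hX hsymm hindep, Finset.sum_div,
          ENNReal.ofReal_sum_of_nonneg fun j _ => by positivity, ← Finset.sum_add_distrib]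
        rfl

lemma measurable_measure_lt_abs (X : Ω → ℝ) : Measurable fun t : ℝ => P {ω | t < |X ω|} :=
  Antitone.measurable fun _ _ hst => measure_mono fun _ hω => hst.trans_lt hω

lemma measurable_tailMajorant [SFinite P] {X : Ω → ℝ} (hX : Measurable X) :
    Measurable (tailMajorant P X) := by
  have hjoint : StronglyMeasurable fun q : ℝ × Ω => trunc q.1 (X q.2) ^ 2 :=
    ((measurable_trunc_uncurry.comp (measurable_fst.prodMk (hX.comp measurable_snd))).pow_const
      2).stronglyMeasurable
  exact (measurable_measure_lt_abs X).add
    ((hjoint.integral_prod_right'.measurable.div (measurable_id.pow_const 2)).ennreal_ofReal)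

lemma ofReal_integral_trunc_sq_div_mul_rpow [IsFiniteMeasure P] {X : Ω → ℝ} (hX : Measurable X)
    {t : ℝ} (ht : 0 < t) (p : ℝ) :
    ENNReal.ofReal ((∫ ω, trunc t (X ω) ^ 2 ∂P) / t ^ 2) * ENNReal.ofReal (t ^ (p - 1))
      = ∫⁻ ω, ENNReal.ofReal (trunc t (X ω) ^ 2 * t ^ (p - 3)) ∂P := by
  have hpow : t ^ (p - 1) = t ^ (p - 3) * t ^ 2 := by
    rw [← Real.rpow_natCast, ← Real.rpow_add ht]; ring_nf
  rw [← ENNReal.ofReal_mul (by positivity), ← ofReal_integral_eq_lintegral_ofReal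
    (((memLp_trunc_comp hX t 2).integrable_sq).mul_const _)
    (ae_of_all _ fun ω => by positivity), integral_mul_const, hpow]
  congr 1
  field_simp

lemma lintegral_ofReal_integral_trunc_sq_div_mul_rpow [IsFiniteMeasure P] {X : Ω → ℝ}
    (hX : Measurable X) {p : ℝ} (hp0 : 0 < p) (hp2 : p < 2) :
    ∫⁻ t in Ioi 0,
        ENNReal.ofReal ((∫ ω, trunc t (X ω) ^ 2 ∂P) / t ^ 2) * ENNReal.ofReal (t ^ (p - 1))
      = ENNReal.ofReal (2 - p)⁻¹ * ∫⁻ ω, ENNReal.ofReal (|X ω| ^ p) ∂P := by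
  have hjoint :
      Measurable fun q : ℝ × Ω => ENNReal.ofReal (trunc q.1 (X q.2) ^ 2 * q.1 ^ (p - 3)) :=
    (((measurable_trunc_uncurry.comp (measurable_fst.prodMk (hX.comp measurable_snd))).pow_const
      2).mul (measurable_fst.pow_const _)).ennreal_ofReal
  calc ∫⁻ t in Set.Ioi 0,
        ENNReal.ofReal ((∫ ω, trunc t (X ω) ^ 2 ∂P) / t ^ 2) * ENNReal.ofReal (t ^ (p - 1))
      = ∫⁻ t in Set.Ioi 0, ∫⁻ ω, ENNReal.ofReal (trunc t (X ω) ^ 2 * t ^ (p - 3)) ∂P :=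
        setLIntegral_congr_fun measurableSet_Ioi fun t ht =>
          ofReal_integral_trunc_sq_div_mul_rpow hX ht p
    _ = ∫⁻ ω, (∫⁻ t in Set.Ioi 0, ENNReal.ofReal (trunc t (X ω) ^ 2 * t ^ (p - 3))) ∂P :=
        lintegral_lintegral_swap hjoint.aemeasurable
    _ = ∫⁻ ω, ENNReal.ofReal (|X ω| ^ p) * ENNReal.ofReal (2 - p)⁻¹ ∂P := by
        simp_rw [lintegral_trunc_sq_mul_rpow hp0 hp2, div_eq_mul_inv,
          ENNReal.ofReal_mul (Real.rpow_nonneg (abs_nonneg _) _)]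
    _ = ENNReal.ofReal (2 - p)⁻¹ * ∫⁻ ω, ENNReal.ofReal (|X ω| ^ p) ∂P := by
        rw [lintegral_mul_const _ (hX.abs.pow_const p).ennreal_ofReal, mul_comm]

lemma lintegral_tailMajorant_mul_rpow [IsFiniteMeasure P] {X : Ω → ℝ} (hX : Measurable X)
    {p : ℝ} (hp0 : 0 < p) (hp2 : p < 2) :
    ENNReal.ofReal p * ∫⁻ t in Ioi 0, tailMajorant P X t * ENNReal.ofReal (t ^ (p - 1))
      = ENNReal.ofReal (2 / (2 - p)) * ∫⁻ ω, ENNReal.ofReal (|X ω| ^ p) ∂P := by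
  have h2p : 0 < 2 - p := by linarith
  simp only [tailMajorant, add_mul]
  rw [lintegral_add_left (f := fun t => P {ω | t < |X ω|} * ENNReal.ofReal (t ^ (p - 1)))
      ((measurable_measure_lt_abs X).mul (measurable_id.pow_const _).ennreal_ofReal),
    mul_add, ← lintegral_rpow_eq_lintegral_meas_lt_mul P (ae_of_all _ fun ω => abs_nonneg (X ω))
      hX.abs.aemeasurable hp0, lintegral_ofReal_integral_trunc_sq_div_mul_rpow hX hp0 hp2,
    ← mul_assoc, ← ENNReal.ofReal_mul hp0.le, ← one_add_mul, ← ENNReal.ofReal_one,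
    ← ENNReal.ofReal_add zero_le_one (by positivity)]
  congr 2
  field_simp
  ring

end PairwiseIndepSymmetric

open PairwiseIndepSymmetric

theorem pairwise_indep_symmetric_sum_moment_le
    (p : ℝ) (hp1 : 1 ≤ p) (hp2 : p < 2)
    {Ω : Type*} [MeasurableSpace Ω] (P : Measure Ω) [IsProbabilityMeasure P]
    (n : ℕ) (X : Fin n → Ω → ℝ) (hX : ∀ j, Measurable (X j))
    (hsymm : ∀ j, Measure.map (X j) P = Measure.map (fun ω => -X j ω) P)
    (hindep : ∀ i j, i ≠ j → IndepFun (X i) (X j) P) :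
    ∫⁻ ω, ENNReal.ofReal (|∑ j, X j ω| ^ p) ∂P
      ≤ ENNReal.ofReal (2 / (2 - p)) *
          ∑ j, ∫⁻ ω, ENNReal.ofReal (|X j ω| ^ p) ∂P := by
  have hp0 : 0 < p := by linarith
  have hweight : Measurable fun t : ℝ => ENNReal.ofReal (t ^ (p - 1)) :=
    (measurable_id.pow_const _).ennreal_ofReal
  calc ∫⁻ ω, ENNReal.ofReal (|∑ j, X j ω| ^ p) ∂P
      = ENNReal.ofReal p *
          ∫⁻ t in Set.Ioi 0, P {ω | t < |∑ j, X j ω|} * ENNReal.ofReal (t ^ (p - 1)) :=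
        lintegral_rpow_eq_lintegral_meas_lt_mul P (ae_of_all _ fun ω => abs_nonneg _)
          (Finset.measurable_sum _ fun j _ => hX j).abs.aemeasurable hp0
    _ ≤ ENNReal.ofReal p *
          ∫⁻ t in Set.Ioi 0, (∑ j, tailMajorant P (X j) t) * ENNReal.ofReal (t ^ (p - 1)) := by
        gcongr ENNReal.ofReal p * ?_
        refine setLIntegral_mono' measurableSet_Ioi fun t ht => ?_
        gcongr
        exact measure_lt_abs_sum_le hX hsymm hindep ht
    _ = ∑ j, ENNReal.ofReal p *
          ∫⁻ t in Set.Ioi 0, tailMajorant P (X j) t * ENNReal.ofReal (t ^ (p - 1)) := by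
        simp_rw [Finset.sum_mul]
        rw [lintegral_finsetSum
            (f := fun j t => tailMajorant P (X j) t * ENNReal.ofReal (t ^ (p - 1)))
            _ fun j _ => (measurable_tailMajorant (hX j)).mul hweight,
          Finset.mul_sum]
    _ = ENNReal.ofReal (2 / (2 - p)) * ∑ j, ∫⁻ ω, ENNReal.ofReal (|X j ω| ^ p) ∂P := by
        simp_rw [lintegral_tailMajorant_mul_rpow (hX _) hp0 hp2, Finset.mul_sum]
end

section
/- Let p ∈ (1, 2] and define ℓ(p, x) = (1−x)^p − x^p + p x^{p−1} for x ∈ (0,1), and C_p = max_{x ∈ (0,1)} ℓ(p, x). Let (S_j)_{j=1}^n be a sequence of random vectors in a real separable Hilbert space H with differences X_j = S_j − S_{j−1} (S₀ = 0) satisfying E‖X_j‖ < ∞ and E(X_j | S_{j−1}) = 0 for all j ∈ {2,…,n}. Then E‖S_n‖^p ≤ E‖X₁‖^p + C_p Σ_{j=2}^n E‖X_j‖^p, assuming this inequality is known to hold in the real-valued case H = ℝ. -/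
open MeasureTheory Finset

/-- `ℓ(p,x) = (1-x)^p - x^p + p x^(p-1)`. -/
noncomputable def ellFun (p x : ℝ) : ℝ := (1 - x) ^ p - x ^ p + p * x ^ (p - 1)

/-- The best constant `C_p = max_{x ∈ (0,1)} ℓ(p,x)`. -/
noncomputable def bahrEsseenConst (p : ℝ) : ℝ := sSup (ellFun p '' Set.Ioo 0 1)

/-!
The whole argument is the pointwise inequality
`‖s + x‖ ^ p ≤ ‖s‖ ^ p + p ‖s‖ ^ (p - 2) ⟪s, x⟫ + C_p ‖x‖ ^ p`.
Applied with `s = S_{j-1}` and `x = X_j`, the middle term has expectation zero, because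
`‖S_{j-1}‖ ^ (p - 2) • S_{j-1}` is `σ(S_{j-1})`-measurable and can be pulled out of
`E(X_j | S_{j-1}) = 0`; summing over `j` gives the theorem.

The pointwise inequality comes from concavity of `t ↦ t ^ (p / 2)` applied to
`‖s + x‖² = ‖s‖² + 2⟪s, x⟫ + ‖x‖²`. If `‖x‖ ≤ 2‖s‖` we use the tangent line at `‖s‖²`, and the
remainder is bounded by `ℓ(p, 1/2) ‖x‖ ^ p`. Otherwise we use the tangent at `(‖x‖ - ‖s‖)²`,
and the bound reduces to `ℓ(p, ‖s‖/‖x‖) ≤ C_p`.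
-/

namespace Real

variable {p : ℝ}

lemma rpow_sub_two_mul_sq {c : ℝ} (hc : 0 < c) (p : ℝ) : c ^ (p - 2) * c ^ 2 = c ^ p := by
  rw [← rpow_natCast, ← rpow_add hc]; norm_num

/-- The tangent-line bound for the concave function `t ↦ t ^ (p / 2)` at `t = c ^ 2`. -/
lemma rpow_le_tangent_sq (hp0 : 0 ≤ p) (hp2 : p ≤ 2) {c N : ℝ} (hc : 0 < c) (hN : 0 ≤ N) :
    N ^ p ≤ c ^ p + p / 2 * c ^ (p - 2) * (N ^ 2 - c ^ 2) := by
  set u := N / c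
  have hu : 0 ≤ u := div_nonneg hN hc.le
  have hbern := rpow_one_add_le_one_add_mul_self (s := u ^ 2 - 1) (by nlinarith)
    (p := p / 2) (by linarith) (by linarith)
  have hsq : (u ^ 2) ^ (p / 2) = u ^ p := by
    rw [← rpow_natCast, ← rpow_mul hu]; congr 1; push_cast; ring
  rw [add_sub_cancel, hsq] at hbern
  have hN : N = c * u := (mul_div_cancel₀ N hc.ne').symm
  calc N ^ p = c ^ p * u ^ p := by rw [hN, mul_rpow hc.le hu]
    _ ≤ c ^ p * (1 + p / 2 * (u ^ 2 - 1)) := mul_le_mul_of_nonneg_left hbern (by positivity)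
    _ = c ^ p + p / 2 * c ^ (p - 2) * (N ^ 2 - c ^ 2) := by
        rw [hN, ← rpow_sub_two_mul_sq hc p]; ring

lemma rpow_sub_two_mul_self_mul_le {u v : ℝ} (hp : 1 ≤ p) (hu : 0 ≤ u) (hv : 0 ≤ v) :
    u ^ (p - 2) * u * v ≤ u ^ p + v ^ p := by
  rcases hu.eq_or_lt with rfl | hu
  · simp only [mul_zero, zero_mul]; positivity
  have hpow : ∀ {w : ℝ}, 0 < w → w ^ (p - 1) * w = w ^ p := fun hw => by
    rw [← rpow_add_one hw.ne']; ring_nf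
  have hu1 : u ^ (p - 2) * u = u ^ (p - 1) := by
    rw [← rpow_add_one hu.ne']; ring_nf
  rw [hu1]
  rcases le_total v u with hvu | huv
  · have : u ^ (p - 1) * v ≤ u ^ (p - 1) * u := by gcongr
    linarith [hpow hu, rpow_nonneg hv p]
  · have : u ^ (p - 1) * v ≤ v ^ (p - 1) * v := by gcongr
    linarith [hpow (hu.trans_le huv), rpow_nonneg hu.le p]

end Real

section BahrEsseenConst

variable {p : ℝ}

lemma ellFun_le_bahrEsseenConst (hp : 1 ≤ p) {x : ℝ} (hx : x ∈ Set.Ioo (0 : ℝ) 1) :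
    ellFun p x ≤ bahrEsseenConst p := by
  refine le_csSup ⟨1 + p, ?_⟩ (Set.mem_image_of_mem _ hx)
  rintro _ ⟨y, ⟨hy0, hy1⟩, rfl⟩
  have h1 : (1 - y) ^ p ≤ 1 := Real.rpow_le_one (by linarith) (by linarith) (by linarith)
  have h2 : 0 ≤ y ^ p := Real.rpow_nonneg hy0.le p
  have h3 : y ^ (p - 1) ≤ 1 := Real.rpow_le_one hy0.le hy1.le (by linarith)
  have h4 : p * y ^ (p - 1) ≤ p := mul_le_of_le_one_right (by linarith) h3
  unfold ellFun
  linarith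

lemma ellFun_half (p : ℝ) : ellFun p (1 / 2) = p * (1 / 2) ^ (p - 1) := by
  norm_num [ellFun]

lemma one_le_bahrEsseenConst (hp1 : 1 ≤ p) (hp2 : p ≤ 2) : 1 ≤ bahrEsseenConst p := by
  have hbernoulli : (2 : ℝ) ^ (p - 1) ≤ p := by
    have := rpow_one_add_le_one_add_mul_self (s := 1) (by norm_num) (p := p - 1)
      (by linarith) (by linarith)
    norm_num at this
    linarith
  have hpos : (0 : ℝ) < 2 ^ (p - 1) := by positivity
  calc (1 : ℝ) ≤ p * (1 / 2) ^ (p - 1) := by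
        rw [Real.div_rpow zero_le_one zero_le_two, Real.one_rpow, ← div_eq_mul_one_div,
          le_div_iff₀ hpos, one_mul]
        exact hbernoulli
    _ = ellFun p (1 / 2) := (ellFun_half p).symm
    _ ≤ bahrEsseenConst p := ellFun_le_bahrEsseenConst hp1 (by norm_num)

lemma sub_rpow_add_mul_le (hp : 1 ≤ p) {a b : ℝ} (ha : 0 < a) (hab : a < b) :
    (b - a) ^ p + p * a ^ (p - 1) * b ≤ a ^ p + bahrEsseenConst p * b ^ p := by
  have hb : 0 < b := ha.trans hab
  have hu : a / b ∈ Set.Ioo (0 : ℝ) 1 := ⟨div_pos ha hb, (div_lt_one hb).2 hab⟩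
  have hscale : ellFun p (a / b) * b ^ p = (b - a) ^ p - a ^ p + p * a ^ (p - 1) * b := by
    have e1 : (1 - a / b) ^ p * b ^ p = (b - a) ^ p := by
      rw [← Real.mul_rpow (by linarith [hu.2]) hb.le, sub_mul, one_mul, div_mul_cancel₀ _ hb.ne']
    have e2 : (a / b) ^ p * b ^ p = a ^ p := by
      rw [← Real.mul_rpow hu.1.le hb.le, div_mul_cancel₀ _ hb.ne']
    have e3 : (a / b) ^ (p - 1) * b ^ p = a ^ (p - 1) * b := by
      rw [Real.div_rpow ha.le hb.le, div_mul_eq_mul_div, mul_div_assoc, ← Real.rpow_sub hb,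
        sub_sub_cancel, Real.rpow_one]
    rw [ellFun, add_mul, sub_mul, e1, e2, mul_assoc, e3, mul_assoc]
  have := mul_le_mul_of_nonneg_right (ellFun_le_bahrEsseenConst hp hu) (by positivity : 0 ≤ b ^ p)
  linarith

end BahrEsseenConst

section Hilbert

open scoped RealInnerProductSpace

variable {H : Type*} [NormedAddCommGroup H] [InnerProductSpace ℝ H] {p : ℝ}

lemma norm_add_rpow_le_of_norm_le_two_mul (hp1 : 1 ≤ p) (hp2 : p ≤ 2) {s x : H} (hs : s ≠ 0)
    (hxs : ‖x‖ ≤ 2 * ‖s‖) :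
    ‖s + x‖ ^ p ≤ ‖s‖ ^ p + p * ‖s‖ ^ (p - 2) * ⟪s, x⟫ + bahrEsseenConst p * ‖x‖ ^ p := by
  have ha : 0 < ‖s‖ := norm_pos_iff.2 hs
  have htan := Real.rpow_le_tangent_sq (by linarith) hp2 ha (norm_nonneg (s + x))
  rw [norm_add_sq_real] at htan
  have hquad : p / 2 * ‖s‖ ^ (p - 2) * ‖x‖ ^ 2 ≤ bahrEsseenConst p * ‖x‖ ^ p := by
    rcases (norm_nonneg x).eq_or_lt with hx | hx
    · rw [← hx, Real.zero_rpow (by linarith)]; simp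
    calc p / 2 * ‖s‖ ^ (p - 2) * ‖x‖ ^ 2 ≤ p / 2 * (‖x‖ / 2) ^ (p - 2) * ‖x‖ ^ 2 := by
          have := Real.rpow_le_rpow_of_nonpos (half_pos hx) (by linarith : ‖x‖ / 2 ≤ ‖s‖)
            (by linarith : p - 2 ≤ 0)
          gcongr
      _ = ellFun p (1 / 2) * ‖x‖ ^ p := by
          have h2 : (2 : ℝ) ^ (p - 2) * 2 = 2 ^ (p - 1) := by
            rw [← Real.rpow_add_one two_ne_zero]; ring_nf
          rw [ellFun_half, Real.div_rpow hx.le zero_le_two, Real.div_rpow zero_le_one zero_le_two,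
            Real.one_rpow, ← h2, ← Real.rpow_sub_two_mul_sq hx p]
          field_simp
      _ ≤ bahrEsseenConst p * ‖x‖ ^ p := by
          gcongr
          exact ellFun_le_bahrEsseenConst hp1 (by norm_num)
  linear_combination htan + hquad

lemma norm_add_rpow_le_of_two_mul_norm_le (hp1 : 1 ≤ p) (hp2 : p ≤ 2) {s x : H} (hs : s ≠ 0)
    (hsx : 2 * ‖s‖ ≤ ‖x‖) :
    ‖s + x‖ ^ p ≤ ‖s‖ ^ p + p * ‖s‖ ^ (p - 2) * ⟪s, x⟫ + bahrEsseenConst p * ‖x‖ ^ p := by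
  have ha : 0 < ‖s‖ := norm_pos_iff.2 hs
  have hτ : 0 ≤ ⟪s, x⟫ + ‖s‖ * ‖x‖ := by
    linarith [(abs_le.1 (abs_real_inner_le_norm s x)).1]
  have htan := Real.rpow_le_tangent_sq (by linarith) hp2 (by linarith : 0 < ‖x‖ - ‖s‖)
    (norm_nonneg (s + x))
  rw [norm_add_sq_real] at htan
  have hmono : (‖x‖ - ‖s‖) ^ (p - 2) ≤ ‖s‖ ^ (p - 2) :=
    Real.rpow_le_rpow_of_nonpos ha (by linarith) (by linarith)
  have hslope : p / 2 * (‖x‖ - ‖s‖) ^ (p - 2)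
      * (‖s‖ ^ 2 + 2 * ⟪s, x⟫ + ‖x‖ ^ 2 - (‖x‖ - ‖s‖) ^ 2)
      ≤ p * ‖s‖ ^ (p - 2) * ⟪s, x⟫ + p * ‖s‖ ^ (p - 1) * ‖x‖ := by
    have hs1 : ‖s‖ ^ (p - 1) = ‖s‖ ^ (p - 2) * ‖s‖ := by
      rw [← Real.rpow_add_one ha.ne']; ring_nf
    calc p / 2 * (‖x‖ - ‖s‖) ^ (p - 2) * (‖s‖ ^ 2 + 2 * ⟪s, x⟫ + ‖x‖ ^ 2 - (‖x‖ - ‖s‖) ^ 2)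
        = p * (‖x‖ - ‖s‖) ^ (p - 2) * (⟪s, x⟫ + ‖s‖ * ‖x‖) := by ring
      _ ≤ p * ‖s‖ ^ (p - 2) * (⟪s, x⟫ + ‖s‖ * ‖x‖) := by gcongr
      _ = p * ‖s‖ ^ (p - 2) * ⟪s, x⟫ + p * ‖s‖ ^ (p - 1) * ‖x‖ := by rw [hs1]; ring
  have hell := sub_rpow_add_mul_le hp1 ha (by linarith : ‖s‖ < ‖x‖)
  linarith

lemma norm_add_rpow_le (hp1 : 1 ≤ p) (hp2 : p ≤ 2) (s x : H) :
    ‖s + x‖ ^ p ≤ ‖s‖ ^ p + p * ‖s‖ ^ (p - 2) * ⟪s, x⟫ + bahrEsseenConst p * ‖x‖ ^ p := by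
  rcases eq_or_ne s 0 with rfl | hs
  · have hC := one_le_bahrEsseenConst hp1 hp2
    simp only [zero_add, norm_zero, Real.zero_rpow (by linarith : p ≠ 0), inner_zero_left,
      mul_zero]
    nlinarith [Real.rpow_nonneg (norm_nonneg x) p]
  rcases le_total ‖x‖ (2 * ‖s‖) with hxs | hsx
  · exact norm_add_rpow_le_of_norm_le_two_mul hp1 hp2 hs hxs
  · exact norm_add_rpow_le_of_two_mul_norm_le hp1 hp2 hs hsx

end Hilbert

section Probability

open scoped RealInnerProductSpace

variable {Ω H : Type*} [NormedAddCommGroup H] [InnerProductSpace ℝ H] [CompleteSpace H]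
  {m mΩ : MeasurableSpace Ω} {μ : Measure Ω}

lemma integral_inner_eq_zero_of_condExp_eq_zero (hm : m ≤ mΩ) [SigmaFinite (μ.trim hm)]
    {g f : Ω → H} (hg : StronglyMeasurable[m] g) (hgf : Integrable (fun ω => ⟪g ω, f ω⟫) μ)
    (hf : Integrable f μ) (hcf : μ[f | m] =ᵐ[μ] 0) :
    ∫ ω, ⟪g ω, f ω⟫ ∂μ = 0 := by
  have hzero : μ[fun ω => ⟪g ω, f ω⟫ | m] =ᵐ[μ] 0 := by
    filter_upwards [condExp_bilin_of_stronglyMeasurable_left (innerSL ℝ) hg hgf hf, hcf]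
      with ω hpull hfω
    exact hpull.trans (by simp [hfω])
  rw [← integral_condExp hm, integral_congr_ae hzero, Pi.zero_def, integral_zero]

lemma lintegral_norm_add_rpow_le_of_integrable {p : ℝ} (hp1 : 1 ≤ p) (hp2 : p ≤ 2)
    (hm : m ≤ mΩ) [SigmaFinite (μ.trim hm)] {T X : Ω → H} (hT : StronglyMeasurable[m] T)
    (hX : Integrable X μ) (hcX : μ[X | m] =ᵐ[μ] 0)
    (hTp : Integrable (fun ω => ‖T ω‖ ^ p) μ) (hXp : Integrable (fun ω => ‖X ω‖ ^ p) μ) :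
    ∫⁻ ω, ENNReal.ofReal (‖T ω + X ω‖ ^ p) ∂μ
      ≤ ∫⁻ ω, ENNReal.ofReal (‖T ω‖ ^ p) ∂μ
        + ENNReal.ofReal (bahrEsseenConst p) * ∫⁻ ω, ENNReal.ofReal (‖X ω‖ ^ p) ∂μ := by
  set C := bahrEsseenConst p
  have hC : 0 ≤ C := zero_le_one.trans (one_le_bahrEsseenConst hp1 hp2)
  set g : Ω → H := fun ω => ‖T ω‖ ^ (p - 2) • T ω
  have hg : StronglyMeasurable[m] g := (hT.norm.measurable.pow_const _).stronglyMeasurable.smul hT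
  have hgX : Integrable (fun ω => ⟪g ω, X ω⟫) μ := by
    refine (hTp.add hXp).mono' (((hg.mono hm).aestronglyMeasurable).inner hX.1)
      (ae_of_all _ fun ω => ?_)
    calc ‖⟪g ω, X ω⟫‖ ≤ ‖g ω‖ * ‖X ω‖ := norm_inner_le_norm _ _
      _ = ‖T ω‖ ^ (p - 2) * ‖T ω‖ * ‖X ω‖ := by
          rw [norm_smul, Real.norm_of_nonneg (Real.rpow_nonneg (norm_nonneg _) _)]
      _ ≤ ‖T ω‖ ^ p + ‖X ω‖ ^ p :=
          Real.rpow_sub_two_mul_self_mul_le hp1 (norm_nonneg _) (norm_nonneg _)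
  have horth : ∫ ω, ⟪g ω, X ω⟫ ∂μ = 0 :=
    integral_inner_eq_zero_of_condExp_eq_zero hm hg hgX hX hcX
  have hpoint : ∀ ω, ‖T ω + X ω‖ ^ p ≤ ‖T ω‖ ^ p + p * ⟪g ω, X ω⟫ + C * ‖X ω‖ ^ p := fun ω => by
    rw [real_inner_smul_left, ← mul_assoc]
    exact norm_add_rpow_le hp1 hp2 (T ω) (X ω)
  have hTgX : Integrable (fun ω => ‖T ω‖ ^ p + p * ⟪g ω, X ω⟫) μ := hTp.add (hgX.const_mul p)
  have hbound : Integrable (fun ω => ‖T ω‖ ^ p + p * ⟪g ω, X ω⟫ + C * ‖X ω‖ ^ p) μ :=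
    hTgX.add (hXp.const_mul C)
  have hnn : ∀ {Y : Ω → H}, 0 ≤ᵐ[μ] fun ω => ‖Y ω‖ ^ p :=
    ae_of_all _ fun ω => Real.rpow_nonneg (norm_nonneg _) p
  calc ∫⁻ ω, ENNReal.ofReal (‖T ω + X ω‖ ^ p) ∂μ
      ≤ ∫⁻ ω, ENNReal.ofReal (‖T ω‖ ^ p + p * ⟪g ω, X ω⟫ + C * ‖X ω‖ ^ p) ∂μ :=
        lintegral_mono fun ω => ENNReal.ofReal_le_ofReal (hpoint ω)
    _ = ENNReal.ofReal (∫ ω, ‖T ω‖ ^ p ∂μ + C * ∫ ω, ‖X ω‖ ^ p ∂μ) := by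
        rw [← ofReal_integral_eq_lintegral_ofReal hbound
          (ae_of_all _ fun ω => (Real.rpow_nonneg (norm_nonneg _) p).trans (hpoint ω)),
          integral_add hTgX (hXp.const_mul C), integral_add hTp (hgX.const_mul p),
          integral_const_mul, integral_const_mul, horth, mul_zero, add_zero]
    _ = ∫⁻ ω, ENNReal.ofReal (‖T ω‖ ^ p) ∂μ
          + ENNReal.ofReal C * ∫⁻ ω, ENNReal.ofReal (‖X ω‖ ^ p) ∂μ := by
        rw [ENNReal.ofReal_add (integral_nonneg fun _ => Real.rpow_nonneg (norm_nonneg _) p)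
            (mul_nonneg hC (integral_nonneg fun _ => Real.rpow_nonneg (norm_nonneg _) p)),
          ENNReal.ofReal_mul hC, ofReal_integral_eq_lintegral_ofReal hTp hnn,
          ofReal_integral_eq_lintegral_ofReal hXp hnn]

lemma lintegral_norm_add_rpow_le {p : ℝ} (hp1 : 1 ≤ p) (hp2 : p ≤ 2) (hm : m ≤ mΩ)
    [SigmaFinite (μ.trim hm)] {T X : Ω → H} (hT : StronglyMeasurable[m] T) (hX : Integrable X μ)
    (hcX : μ[X | m] =ᵐ[μ] 0) :
    ∫⁻ ω, ENNReal.ofReal (‖T ω + X ω‖ ^ p) ∂μ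
      ≤ ∫⁻ ω, ENNReal.ofReal (‖T ω‖ ^ p) ∂μ
        + ENNReal.ofReal (bahrEsseenConst p) * ∫⁻ ω, ENNReal.ofReal (‖X ω‖ ^ p) ∂μ := by
  have hC : 0 < bahrEsseenConst p := zero_lt_one.trans_le (one_le_bahrEsseenConst hp1 hp2)
  have hnn : ∀ {Y : Ω → H}, 0 ≤ᵐ[μ] fun ω => ‖Y ω‖ ^ p :=
    ae_of_all _ fun ω => Real.rpow_nonneg (norm_nonneg _) p
  rcases eq_or_ne (∫⁻ ω, ENNReal.ofReal (‖T ω‖ ^ p) ∂μ) ⊤ with hTtop | hTtop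
  · simp [hTtop]
  rcases eq_or_ne (∫⁻ ω, ENNReal.ofReal (‖X ω‖ ^ p) ∂μ) ⊤ with hXtop | hXtop
  · simp [hXtop, ENNReal.mul_top (ENNReal.ofReal_pos.2 hC).ne']
  refine lintegral_norm_add_rpow_le_of_integrable hp1 hp2 hm hT hX hcX ?_ ?_
  · exact (lintegral_ofReal_ne_top_iff_integrable
      (((hT.mono hm).aestronglyMeasurable.norm.aemeasurable.pow_const p).aestronglyMeasurable)
      hnn).1 hTtop
  · exact (lintegral_ofReal_ne_top_iff_integrable
      (hX.1.norm.aemeasurable.pow_const p).aestronglyMeasurable hnn).1 hXtop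

lemma lintegral_norm_sum_rpow_le [MeasurableSpace H] [BorelSpace H] [SecondCountableTopology H]
    {p : ℝ} (hp1 : 1 ≤ p) (hp2 : p ≤ 2) [IsFiniteMeasure μ] {X : ℕ → Ω → H}
    (hX : ∀ j, Measurable (X j)) (n : ℕ) (hint : ∀ j ∈ Icc 2 n, Integrable (X j) μ)
    (hcond : ∀ j ∈ Icc 2 n,
      μ[X j | MeasurableSpace.comap (fun ω => ∑ i ∈ Icc 1 (j - 1), X i ω) inferInstance] =ᵐ[μ] 0) :
    ∫⁻ ω, ENNReal.ofReal (‖∑ i ∈ Icc 1 n, X i ω‖ ^ p) ∂μ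
      ≤ ∫⁻ ω, ENNReal.ofReal (‖X 1 ω‖ ^ p) ∂μ
        + ENNReal.ofReal (bahrEsseenConst p) *
            ∑ j ∈ Icc 2 n, ∫⁻ ω, ENNReal.ofReal (‖X j ω‖ ^ p) ∂μ := by
  induction n with
  | zero => simp [Real.zero_rpow (by linarith : p ≠ 0)]
  | succ n ih =>
    rcases Nat.eq_zero_or_pos n with rfl | hn
    · simp
    have hsub : Icc 2 n ⊆ Icc 2 (n + 1) := Icc_subset_Icc_right n.le_succ
    have hj : n + 1 ∈ Icc 2 (n + 1) := mem_Icc.2 ⟨by omega, le_rfl⟩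
    have hT : Measurable fun ω => ∑ i ∈ Icc 1 n, X i ω := Finset.measurable_sum _ fun i _ => hX i
    have := isFiniteMeasure_trim (μ := μ) hT.comap_le
    have hstep := lintegral_norm_add_rpow_le hp1 hp2 hT.comap_le
      (comap_measurable _).stronglyMeasurable (hint _ hj) (by simpa using hcond _ hj)
    simp only [sum_Icc_succ_top (by omega : 1 ≤ n + 1), sum_Icc_succ_top (by omega : 2 ≤ n + 1),
      mul_add, ← add_assoc]
    exact hstep.trans (add_le_add_left (ih (fun j hj => hint j (hsub hj))
      (fun j hj => hcond j (hsub hj))) _)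

end Probability

theorem vMartingale_bahr_esseen_hilbert_general
    (p : ℝ) (hp1 : 1 < p) (hp2 : p ≤ 2)
    {H : Type*} [NormedAddCommGroup H] [InnerProductSpace ℝ H]
    [CompleteSpace H] [SecondCountableTopology H] [MeasurableSpace H] [BorelSpace H]
    {Ω : Type*} [MeasurableSpace Ω] (P : Measure Ω) [IsProbabilityMeasure P]
    (n : ℕ) (X : ℕ → Ω → H) (hX : ∀ j, Measurable (X j))
    (S : ℕ → Ω → H) (hS : ∀ m, S m = fun ω => ∑ i ∈ Finset.Icc 1 m, X i ω)
    (hint : ∀ j ∈ Finset.Icc 2 n, Integrable (fun ω => ‖X j ω‖) P)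
    (hcond : ∀ j ∈ Finset.Icc 2 n,
      P[X j | MeasurableSpace.comap (S (j - 1)) inferInstance] =ᵐ[P] 0) :
    ∫⁻ ω, ENNReal.ofReal (‖S n ω‖ ^ p) ∂P
      ≤ ∫⁻ ω, ENNReal.ofReal (‖X 1 ω‖ ^ p) ∂P
        + ENNReal.ofReal (bahrEsseenConst p) *
            ∑ j ∈ Finset.Icc 2 n, ∫⁻ ω, ENNReal.ofReal (‖X j ω‖ ^ p) ∂P := by
  simp only [hS] at hcond ⊢
  exact lintegral_norm_sum_rpow_le hp1.le hp2 hX n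
    (fun j hj => (integrable_norm_iff (hX j).aestronglyMeasurable).1 (hint j hj)) hcond

theorem vMartingale_bahr_esseen_hilbert
    (p : ℝ) (hp1 : 1 < p) (hp2 : p ≤ 2)
    {H : Type*} [NormedAddCommGroup H] [InnerProductSpace ℝ H]
    [CompleteSpace H] [SecondCountableTopology H] [MeasurableSpace H] [BorelSpace H]
    {Ω : Type*} [MeasurableSpace Ω] (P : Measure Ω) [IsProbabilityMeasure P]
    (n : ℕ) (X : ℕ → Ω → H) (hX : ∀ j, Measurable (X j))
    (S : ℕ → Ω → H) (hS : ∀ m, S m = fun ω => ∑ i ∈ Finset.Icc 1 m, X i ω)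
    (hint : ∀ j ∈ Finset.Icc 2 n, Integrable (fun ω => ‖X j ω‖) P)
    (hcond : ∀ j ∈ Finset.Icc 2 n,
      P[X j | MeasurableSpace.comap (S (j - 1)) inferInstance] =ᵐ[P] 0)
    -- the inequality is assumed to be known in the real-valued case `H = ℝ`:
    (hreal : ∀ (Ω' : Type) (mΩ' : MeasurableSpace Ω') (P' : Measure Ω'),
      IsProbabilityMeasure P' →
      ∀ (Y : ℕ → Ω' → ℝ) (S' : ℕ → Ω' → ℝ),
      (∀ j, Measurable (Y j)) →
      (∀ m, S' m = fun ω => ∑ i ∈ Finset.Icc 1 m, Y i ω) →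
      (∀ j ∈ Finset.Icc 2 n, Integrable (fun ω => |Y j ω|) P') →
      (∀ j ∈ Finset.Icc 2 n,
        P'[Y j | MeasurableSpace.comap (S' (j - 1)) inferInstance] =ᵐ[P'] 0) →
      ∫⁻ ω, ENNReal.ofReal (|S' n ω| ^ p) ∂P'
        ≤ ∫⁻ ω, ENNReal.ofReal (|Y 1 ω| ^ p) ∂P'
          + ENNReal.ofReal (bahrEsseenConst p) *
              ∑ j ∈ Finset.Icc 2 n, ∫⁻ ω, ENNReal.ofReal (|Y j ω| ^ p) ∂P') :
    ∫⁻ ω, ENNReal.ofReal (‖S n ω‖ ^ p) ∂P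
      ≤ ∫⁻ ω, ENNReal.ofReal (‖X 1 ω‖ ^ p) ∂P
        + ENNReal.ofReal (bahrEsseenConst p) *
            ∑ j ∈ Finset.Icc 2 n, ∫⁻ ω, ENNReal.ofReal (‖X j ω‖ ^ p) ∂P :=
  vMartingale_bahr_esseen_hilbert_general p hp1 hp2 P n X hX S hS hint hcond
end
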